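/- arXiv:2305.01117 — 6 statements merged into one kernel-verified Lean document; each statement's English description precedes it below -/
import Mathlib

section
/- For all real numbers $v > 0$ and $\theta > 0$, one has $\sum_{k \ge (1+\theta)v} \frac{v^k}{k!} < \frac{\sqrt{1+\theta}}{\theta\sqrt{2\pi v}} \exp\big((R(\theta)+1)v\big)$, where $R(\theta) = \theta - (\theta+1)\log(\theta+1)$. -/
/-!
Put `m = ⌈(1 + θ) v⌉₊`. The tail `∑_{k ≥ m} v^k/k!` is dominated term by term by the geometric
series `(v^m/m!) ∑ (v/(m+1))^i`, since `(m+i)! ≥ m! (m+1)^i`, and its ratio satisfies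
`1 - v/(m+1) > θ/(1+θ)`. Stirling's lower bound `m! ≥ √(2πm) (m/e)^m` gives
`v^m/m! ≤ exp(m(1 + log(v/m)))/√(2πm)`, and `y ↦ y (1 + log (v/y))` decreases for `y ≥ v`, so
`m` may be replaced by `(1 + θ) v`, where the exponent equals `(R θ + 1) v`.
-/

open Real Finset
open scoped Nat

theorem tsum_ite_le_natCast_eq_tsum_nat_add_ceil {M : Type*} [AddCommMonoid M]
    [TopologicalSpace M] [T2Space M] [ContinuousAdd M] (c : ℝ) (a : ℕ → M)
    (ha : Summable fun i ↦ a (i + ⌈c⌉₊)) :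
    ∑' k : ℕ, (if c ≤ (k : ℝ) then a k else 0) = ∑' i, a (i + ⌈c⌉₊) := by
  have hshift : ∀ i, (if c ≤ ((i + ⌈c⌉₊ : ℕ) : ℝ) then a (i + ⌈c⌉₊) else 0) = a (i + ⌈c⌉₊) :=
    fun i ↦ if_pos (Nat.ceil_le.mp (Nat.le_add_left _ _))
  have hhead : ∑ k ∈ range ⌈c⌉₊, (if c ≤ (k : ℝ) then a k else 0) = 0 :=
    sum_eq_zero fun k hk ↦ if_neg (not_le.mpr (Nat.lt_ceil.mp (mem_range.mp hk)))
  rw [← (Summable.sum_add_tsum_nat_add' (k := ⌈c⌉₊) (by simpa only [hshift] using ha)),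
    hhead, zero_add]
  simp only [hshift]

theorem tsum_pow_div_factorial_nat_add_le {v : ℝ} (hv : 0 ≤ v) {m : ℕ} (hvm : v < m + 1) :
    ∑' i, v ^ (i + m) / (i + m)! ≤ v ^ m / m ! * (1 - v / (m + 1))⁻¹ := by
  have hr : v / (m + 1) < 1 := (div_lt_one (by positivity)).mpr hvm
  have hterm : ∀ i, v ^ (i + m) / (i + m)! ≤ v ^ m / m ! * (v / (m + 1)) ^ i := by
    intro i
    have hfact : (m ! : ℝ) * (m + 1) ^ i ≤ (i + m)! := by
      rw [add_comm i m]; exact_mod_cast Nat.factorial_mul_pow_le_factorial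
    calc v ^ (i + m) / (i + m)! ≤ v ^ (i + m) / (m ! * (m + 1) ^ i) := by gcongr
      _ = v ^ m / m ! * (v / (m + 1)) ^ i := by rw [div_pow, pow_add]; field_simp
  rw [← tsum_geometric_of_lt_one (by positivity) hr, ← tsum_mul_left]
  exact ((summable_nat_add_iff m).mpr (Real.summable_pow_div_factorial v)).tsum_le_tsum hterm
    ((summable_geometric_of_lt_one (by positivity) hr).mul_left _)

-- `x log (x/c) ≥ x - c` and `log (v/c) ≤ 0`.
theorem mul_one_add_log_div_le_of_le {v c x : ℝ} (hv : 0 < v) (hvc : v ≤ c) (hcx : c ≤ x) :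
    x * (1 + log (v / x)) ≤ c * (1 + log (v / c)) := by
  have hc : 0 < c := hv.trans_le hvc
  have hx : 0 < x := hc.trans_le hcx
  have hsplit : log (v / x) = log (v / c) - log (x / c) := by
    rw [← log_div (by positivity) (by positivity)]; congr 1; field_simp
  have hlog : 1 - c / x ≤ log (x / c) := by
    simpa only [inv_div] using one_sub_inv_le_log_of_pos (div_pos hx hc)
  have hneg : log (v / c) ≤ 0 := log_nonpos (by positivity) ((div_le_one hc).mpr hvc)
  have : x * (1 - c / x) = x - c := by field_simp
  rw [hsplit]
  nlinarith

theorem pow_div_factorial_le_exp_div_sqrt {v : ℝ} (hv : 0 < v) {n : ℕ} (hn : n ≠ 0) :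
    v ^ n / n ! ≤ exp (n * (1 + log (v / n))) / √(2 * π * n) := by
  have hn' : (0 : ℝ) < n := by positivity
  have hexp : exp (n * (1 + log (v / n))) = v ^ n / (n / exp 1) ^ n := by
    rw [exp_nat_mul, exp_add, exp_log (by positivity), ← div_pow]
    congr 1; field_simp
  rw [hexp, div_div, mul_comm]
  gcongr
  exact Stirling.le_factorial_stirling n

theorem pow_div_factorial_le_exp_div_sqrt_of_le {v c : ℝ} {n : ℕ} (hv : 0 < v) (hvc : v ≤ c)
    (hcn : c ≤ n) :
    v ^ n / n ! ≤ exp (c * (1 + log (v / c))) / √(2 * π * c) := by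
  have hn : n ≠ 0 := by rintro rfl; norm_num at hcn; linarith
  refine (pow_div_factorial_le_exp_div_sqrt hv hn).trans ?_
  have hc : 0 < c := hv.trans_le hvc
  exact div_le_div₀ (exp_nonneg _) (exp_le_exp.mpr (mul_one_add_log_div_le_of_le hv hvc hcn))
    (by positivity) (sqrt_le_sqrt (by gcongr))

theorem one_sub_div_add_one_gt {v θ x : ℝ} (hv : 0 ≤ v) (hθ : 0 < θ)
    (hx : (1 + θ) * v ≤ x) :
    θ / (1 + θ) < 1 - v / (x + 1) := by
  have hlt : v / (x + 1) < 1 / (1 + θ) := by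
    rw [div_lt_div_iff₀ (by nlinarith) (by positivity)]; linarith
  have hθ' : θ / (1 + θ) = 1 - 1 / (1 + θ) := by field_simp; ring
  linarith

/-- Norton's upper-truncation estimate: for `v, θ > 0`,
`∑_{k ≥ (1+θ)v} v^k/k! < (√(1+θ)/(θ √(2πv))) exp((R(θ)+1) v)`,
where `R t = t - (t+1) log(t+1)`. -/
theorem norton_upper_truncation (v θ : ℝ) (hv : 0 < v) (hθ : 0 < θ)
    (R : ℝ → ℝ) (hR : ∀ t : ℝ, R t = t - (t + 1) * Real.log (t + 1)) :
    ∑' k : ℕ, (if (1 + θ) * v ≤ (k : ℝ) then v ^ k / (Nat.factorial k : ℝ) else 0)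
      < (Real.sqrt (1 + θ) / (θ * Real.sqrt (2 * Real.pi * v))) *
          Real.exp ((R θ + 1) * v) := by
  set m := ⌈(1 + θ) * v⌉₊
  have hm : (1 + θ) * v ≤ m := Nat.le_ceil _
  have hvc : v ≤ (1 + θ) * v := by nlinarith
  have hgap : θ / (1 + θ) < 1 - v / (m + 1) := one_sub_div_add_one_gt hv.le hθ hm
  have hgap_pos : 0 < 1 - v / (m + 1) := lt_trans (by positivity) hgap
  have hrhs : exp ((1 + θ) * v * (1 + log (v / ((1 + θ) * v)))) / √(2 * π * ((1 + θ) * v))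
      * ((1 + θ) / θ) = √(1 + θ) / (θ * √(2 * π * v)) * exp ((R θ + 1) * v) := by
    have hlog : log (v / ((1 + θ) * v)) = - log (1 + θ) := by
      rw [div_mul_cancel_right₀ hv.ne', log_inv]
    have hsqrt : √(2 * π * ((1 + θ) * v)) = √(1 + θ) * √(2 * π * v) := by
      rw [← sqrt_mul (by positivity)]; ring_nf
    rw [hR, hlog, hsqrt, add_comm θ 1]
    field_simp
    rw [sq_sqrt (by positivity)]; ring_nf
  have htail : Summable fun i ↦ v ^ (i + m) / (i + m)! :=
    (summable_nat_add_iff m).mpr (Real.summable_pow_div_factorial v)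
  rw [tsum_ite_le_natCast_eq_tsum_nat_add_ceil _ (fun k ↦ v ^ k / k !) htail, ← hrhs]
  calc ∑' i, v ^ (i + m) / (i + m)! ≤ v ^ m / m ! * (1 - v / (m + 1))⁻¹ :=
        tsum_pow_div_factorial_nat_add_le hv.le (by linarith)
    _ < _ := by
      rw [← inv_div θ]
      exact mul_lt_mul' (pow_div_factorial_le_exp_div_sqrt_of_le hv hvc hm)
        (inv_strictAnti₀ (by positivity) hgap) (inv_pos.mpr hgap_pos).le (by positivity)
end

section
/- There exist constants $C > 0$ and $W_0 > 0$ such that for all real $W \ge W_0$ and all real $E$ with $0 < E \le W^{2/3}/2$, one has $\sum_{0 \le k \le W - E} \frac{W^k}{k!} \le C \frac{W^{1/2}}{E} \exp\left(W - \frac{E^2}{2W}\right)$. -/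
/-!
Let `m = ⌊W - E⌋₊`. Below the mode of the Poisson weights `W^k/k!` consecutive terms shrink by
the factor `k/W ≤ m/W`, so the truncated sum is at most its last term times the geometric factor
`W/(W - m) ≤ W/E`. Stirling's lower bound `m! ≥ √(2πm) (m/e)^m` together with
`m log(W/m) ≤ (W - m) - (W - m)²/(2W)` bounds that last term by `exp(W - E²/(2W)) / √(2πm)`,
and `2πm ≥ W` as soon as `E ≤ W/2` and `W ≥ 3`.
-/

open Finset Real
open scoped Nat

theorem sub_inv_div_two_le_log {u : ℝ} (hu₀ : 0 < u) (hu₁ : u ≤ 1) : (u - u⁻¹) / 2 ≤ log u := by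
  rw [← sinh_log hu₀]
  exact sinh_le_self_iff.mpr (log_nonpos hu₀.le hu₁)

theorem mul_log_div_le {x y : ℝ} (hy : 0 < y) (hyx : y ≤ x) :
    y * log (x / y) ≤ x - y - (x - y) ^ 2 / (2 * x) := by
  have hx : 0 < x := hy.trans_le hyx
  have h := sub_inv_div_two_le_log (div_pos hy hx) ((div_le_one hx).mpr hyx)
  rw [inv_div] at h
  calc y * log (x / y) = y * -log (y / x) := by rw [← log_inv, inv_div]
    _ ≤ y * ((x / y - y / x) / 2) := by gcongr; linarith
    _ = x - y - (x - y) ^ 2 / (2 * x) := by field_simp; ring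

theorem pow_div_factorial_le {x : ℝ} {n : ℕ} (hn : n ≠ 0) (hnx : (n : ℝ) ≤ x) :
    x ^ n / n ! ≤ exp (x - (x - n) ^ 2 / (2 * x)) / √(2 * π * n) := by
  have hn₀ : (0 : ℝ) < n := by positivity
  have hx : 0 < x := hn₀.trans_le hnx
  have hpow : (x / (n / exp 1)) ^ n ≤ exp (x - (x - n) ^ 2 / (2 * x)) := by
    rw [← log_le_iff_le_exp (by positivity), log_pow, log_div hx.ne' (by positivity),
      log_div hn₀.ne' (exp_pos 1).ne', log_exp]
    have h := mul_log_div_le hn₀ hnx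
    rw [log_div hx.ne' hn₀.ne'] at h
    linarith
  calc x ^ n / n ! ≤ x ^ n / (√(2 * π * n) * (n / exp 1) ^ n) := by
        gcongr
        exact Stirling.le_factorial_stirling n
    _ = (x / (n / exp 1)) ^ n / √(2 * π * n) := by simp only [div_pow]; field_simp
    _ ≤ exp (x - (x - n) ^ 2 / (2 * x)) / √(2 * π * n) := by gcongr

theorem sum_range_pow_div_factorial_le {x : ℝ} {m : ℕ} (hm : (m : ℝ) < x) :
    ∑ k ∈ range (m + 1), x ^ k / k ! ≤ x ^ m / m ! * (x / (x - m)) := by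
  induction m with
  | zero =>
    have hx : x ≠ 0 := by simp only [CharP.cast_eq_zero] at hm; exact hm.ne'
    simp [hx]
  | succ m ih =>
    push_cast at hm
    have hx : 0 < x := by linarith [m.cast_nonneg (α := ℝ)]
    have hratio : (m + 1 : ℝ) / (x - m) + 1 ≤ x / (x - (m + 1)) := by
      rw [div_add_one (by linarith), div_le_div_iff₀ (by linarith) (by linarith)]
      nlinarith [m.cast_nonneg (α := ℝ)]
    rw [sum_range_succ]
    calc _ ≤ x ^ m / m ! * (x / (x - m)) + x ^ (m + 1) / (m + 1)! := by
          gcongr; exact ih (by linarith)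
      _ = x ^ (m + 1) / (m + 1)! * ((m + 1 : ℝ) / (x - m) + 1) := by
          rw [Nat.factorial_succ, pow_succ]; push_cast
          field_simp
      _ ≤ x ^ (m + 1) / (m + 1)! * (x / (x - (m + 1))) := by gcongr
      _ = _ := by push_cast; ring

/-- Gaussian-type bound for the lower tail of the exponential series:
there are `C, W₀ > 0` such that for `W ≥ W₀` and `0 < E ≤ W^(2/3)/2`,
`∑_{0 ≤ k ≤ W-E} W^k/k! ≤ C (W^(1/2)/E) exp(W - E²/(2W))`. -/
theorem exp_series_lower_tail_bound :
    ∃ C > (0 : ℝ), ∃ W₀ > (0 : ℝ), ∀ W : ℝ, W₀ ≤ W → ∀ E : ℝ, 0 < E →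
      E ≤ W ^ ((2 : ℝ) / 3) / 2 →
      ∑ k ∈ Finset.range (⌊W - E⌋₊ + 1),
          (if (k : ℝ) ≤ W - E then W ^ k / (Nat.factorial k : ℝ) else 0)
        ≤ C * (W ^ ((1 : ℝ) / 2) / E) * Real.exp (W - E ^ 2 / (2 * W)) := by
  refine ⟨1, one_pos, 3, by norm_num, fun W hW E hE hEW => ?_⟩
  replace hEW : E ≤ W / 2 :=
    hEW.trans (by gcongr; exact rpow_le_self_of_one_le (by linarith) (by norm_num))
  set m := ⌊W - E⌋₊
  have hmE : (m : ℝ) ≤ W - E := Nat.floor_le (by linarith)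
  have hm : W - E < m + 1 := Nat.lt_floor_add_one _
  have hm₀ : m ≠ 0 := by
    rintro h
    simp only [h, Nat.cast_zero] at hm
    linarith
  have hsqrt : √W ≤ √(2 * π * m) := sqrt_le_sqrt (by nlinarith [pi_gt_three])
  have hδ : E ≤ W - m := by linarith
  have hWm : 0 < W - m := hE.trans_le hδ
  rw [sum_congr rfl fun k hk => if_pos ((Nat.cast_le.mpr (mem_range_succ_iff.mp hk)).trans hmE),
    one_mul, ← sqrt_eq_rpow]
  calc _ ≤ W ^ m / m ! * (W / (W - m)) := sum_range_pow_div_factorial_le (x := W) (by linarith)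
    _ ≤ exp (W - (W - m) ^ 2 / (2 * W)) / √(2 * π * m) * (W / (W - m)) := by
        gcongr ?_ * _
        exact pow_div_factorial_le hm₀ (by linarith)
    _ ≤ exp (W - E ^ 2 / (2 * W)) / √W * (W / E) := by gcongr
    _ = √W / E * exp (W - E ^ 2 / (2 * W)) := by
        have hsqrtW : 0 < √W := sqrt_pos.mpr (by linarith)
        field_simp
        rw [sq_sqrt (by linarith)]
end

section
/- There exist constants $C > 0$ and $W_0 > 0$ such that for all real $W \ge W_0$ and all real $E$ with $0 < E \le W^{2/3}/2$, one has $\sum_{k \ge W + E} \frac{W^k}{k!} \le C \frac{W^{1/2}}{E} \exp\left(W - \frac{E^2}{2W}\right)$. -/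
/-!
Let `m = ⌈W + E⌉₊`. Comparing the tail with a geometric series of ratio `W / m` bounds it by
`W ^ m / m! * m / (m - W)`. Stirling's bound `m! ≥ √(2πm) (m / e) ^ m` together with the
inequality `log (m / W) ≥ 2 (m - W) / (m + W)` (logarithmic mean ≤ arithmetic mean) gives
`W ^ m / m! ≤ exp (W - (m - W) ^ 2 / (W + m)) / √(2πm)`. Finally `E ≤ m - W < E + 1`, and the
hypothesis `E ≤ W ^ (2/3) / 2` makes `(m - W) ^ 3 ≤ W ^ 2`, so this exponent is at most
`W - E ^ 2 / (2W) + 1/4`.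
-/

open Real Nat

lemma pow_add_div_factorial_le {x : ℝ} (hx : 0 ≤ x) {m : ℕ} (hm : 0 < m) (j : ℕ) :
    x ^ (j + m) / (j + m)! ≤ x ^ m / m ! * (x / m) ^ j := by
  have hfact : (m ! * m ^ j : ℝ) ≤ (j + m)! := by
    calc (m ! * m ^ j : ℝ) ≤ m ! * (m + 1) ^ j := by gcongr; linarith
      _ ≤ (m + j)! := by exact_mod_cast Nat.factorial_mul_pow_le_factorial
      _ = (j + m)! := by rw [Nat.add_comm]
  calc x ^ (j + m) / (j + m)! ≤ x ^ (j + m) / (m ! * m ^ j) := by gcongr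
    _ = x ^ m / m ! * (x / m) ^ j := by rw [pow_add, div_pow]; ring

lemma tsum_exp_series_tail_le {x : ℝ} {m : ℕ} (hx : 0 ≤ x) (hxm : x < m) :
    ∑' k : ℕ, (if m ≤ k then x ^ k / k ! else 0) ≤ x ^ m / m ! * (m / (m - x)) := by
  have hm : 0 < m := by exact_mod_cast hx.trans_lt hxm
  have hgeom : HasSum (fun j : ℕ => x ^ m / m ! * (x / m) ^ j) (x ^ m / m ! * (m / (m - x))) := by
    have hr : x / m < 1 := (div_lt_one (by positivity)).2 hxm
    have h := (hasSum_geometric_of_lt_one (by positivity) hr).mul_left (x ^ m / m !)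
    rwa [one_sub_div (by positivity), inv_div] at h
  have htail := ((summable_nat_add_iff m).2 (Real.summable_pow_div_factorial x)).hasSum
  have hshift : HasSum (fun k : ℕ => if m ≤ k then x ^ k / k ! else 0)
      (∑' j : ℕ, x ^ (j + m) / (j + m)!) := by
    rw [← hasSum_nat_add_iff' m]
    simpa [Finset.sum_eq_zero (fun i hi => if_neg (Finset.mem_range.1 hi).not_ge)] using htail
  rw [hshift.tsum_eq]
  exact hasSum_le (pow_add_div_factorial_le hx hm) htail hgeom

lemma two_mul_sub_div_add_le_log_div {x y : ℝ} (hx : 0 < x) (hxy : x ≤ y) :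
    2 * (y - x) / (x + y) ≤ log (y / x) := by
  rcases hxy.eq_or_lt with rfl | hxy
  · simp
  -- `log (y / x)` is an `artanh` series with nonnegative terms; keep only the first one.
  have h := hasSum_log_one_add_inv (div_pos hx (sub_pos.2 hxy))
  have ha : 2 * (x / (y - x)) + 1 = (x + y) / (y - x) := by field_simp; ring
  calc 2 * (y - x) / (x + y)
      = 2 * (1 / (2 * ((0 : ℕ) : ℝ) + 1)) * (1 / (2 * (x / (y - x)) + 1)) ^ (2 * 0 + 1) := by
        rw [ha]
        simp only [Nat.cast_zero, mul_zero, zero_add, div_one, mul_one, pow_one, one_div, inv_div]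
        ring
    _ ≤ log (1 + (x / (y - x))⁻¹) := le_hasSum h 0 (fun k _ => by positivity)
    _ = log (y / x) := by congr 1; field_simp; ring

lemma mul_one_add_log_div_le {x y : ℝ} (hx : 0 < x) (hxy : x ≤ y) :
    y * (1 + log (x / y)) ≤ x - (y - x) ^ 2 / (x + y) := by
  have hy : 0 < y := hx.trans_le hxy
  calc y * (1 + log (x / y)) ≤ y * (1 - 2 * (y - x) / (x + y)) := by
        rw [← inv_div, log_inv]
        gcongr
        linarith [two_mul_sub_div_add_le_log_div hx hxy]
    _ = x - (y - x) ^ 2 / (x + y) := by field_simp; ring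

lemma pow_div_factorial_le_exp_div_sqrt_s3 {x : ℝ} {m : ℕ} (hx : 0 < x) (hxm : x ≤ m) :
    x ^ m / m ! ≤ exp (x - (m - x) ^ 2 / (x + m)) / √(2 * π * m) := by
  have hm : (0 : ℝ) < m := hx.trans_le hxm
  calc x ^ m / m ! ≤ x ^ m / (√(2 * π * m) * (m / exp 1) ^ m) := by
        gcongr; exact Stirling.le_factorial_stirling m
    _ = exp (m * (1 + log (x / m))) / √(2 * π * m) := by
        have hpow : (m / exp 1) ^ m * (exp 1 * (x / m)) ^ m = x ^ m := by
          rw [← mul_pow]; congr 1; field_simp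
        rw [exp_nat_mul, exp_add, exp_log (by positivity), ← hpow]
        field_simp
    _ ≤ exp (x - (m - x) ^ 2 / (x + m)) / √(2 * π * m) := by
        gcongr; exact mul_one_add_log_div_le hx hxm

lemma tsum_exp_series_tail_le_gaussian {x : ℝ} {m : ℕ} (hx : 0 < x) (hxm : x < m) :
    ∑' k : ℕ, (if m ≤ k then x ^ k / k ! else 0) ≤
      √(m / (2 * π)) / (m - x) * exp (x - (m - x) ^ 2 / (x + m)) := by
  have hm : (0 : ℝ) < m := hx.trans hxm
  calc _ ≤ x ^ m / m ! * (m / (m - x)) := tsum_exp_series_tail_le hx.le hxm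
    _ ≤ exp (x - (m - x) ^ 2 / (x + m)) / √(2 * π * m) * (m / (m - x)) := by
        gcongr ?_ * _; exact pow_div_factorial_le_exp_div_sqrt_s3 hx hxm.le
    _ = √(m / (2 * π)) / (m - x) * exp (x - (m - x) ^ 2 / (x + m)) := by
        rw [sqrt_div hm.le, sqrt_mul (by positivity)]
        have := sq_sqrt hm.le
        field_simp
        rw [this]

lemma pow_three_le_sq_of_le_rpow_two_thirds {W E t : ℝ} (hW : 3 ≤ W)
    (hEW : E ≤ W ^ ((2 : ℝ) / 3) / 2) (ht : 0 ≤ t) (htE : t ≤ E + 1) : t ^ 3 ≤ W ^ 2 := by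
  set u := W ^ ((2 : ℝ) / 3)
  have hu3 : u ^ 3 = W ^ 2 := by
    rw [← rpow_natCast u, ← rpow_mul (by linarith)]
    norm_num
  have hu : 2 ≤ u :=
    le_of_pow_le_pow_left₀ three_ne_zero (by positivity) (by rw [hu3]; nlinarith)
  calc t ^ 3 ≤ u ^ 3 := by gcongr; linarith
    _ = W ^ 2 := hu3

lemma sq_div_two_mul_le_of_pow_three_le {W E y : ℝ} (hW : 0 < W) (hE : 0 < E) (hy : W + E ≤ y)
    (hcube : (y - W) ^ 3 ≤ W ^ 2) :
    E ^ 2 / (2 * W) ≤ (y - W) ^ 2 / (W + y) + 1 / 4 := by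
  set t := y - W
  have ht : E ≤ t := by linarith
  have hWy : W + y = 2 * W + t := by ring
  have hsq : E ^ 2 ≤ t ^ 2 := pow_le_pow_left₀ hE.le ht 2
  have hgap : E ^ 2 * t / (2 * W * (2 * W + t)) ≤ 1 / 4 := by
    rw [div_le_iff₀ (by nlinarith)]
    nlinarith [mul_le_mul_of_nonneg_right hsq (hE.le.trans ht)]
  calc E ^ 2 / (2 * W) = E ^ 2 / (2 * W + t) + E ^ 2 * t / (2 * W * (2 * W + t)) := by
        have : 2 * W + t ≠ 0 := by linarith
        field_simp
    _ ≤ (y - W) ^ 2 / (W + y) + 1 / 4 := by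
        rw [hWy]; gcongr; linarith

/-- Gaussian-type bound for the upper tail of the exponential series:
there are `C, W₀ > 0` such that for `W ≥ W₀` and `0 < E ≤ W^(2/3)/2`,
`∑_{k ≥ W+E} W^k/k! ≤ C (W^(1/2)/E) exp(W - E²/(2W))`. -/
theorem exp_series_upper_tail_bound :
    ∃ C > (0 : ℝ), ∃ W₀ > (0 : ℝ), ∀ W : ℝ, W₀ ≤ W → ∀ E : ℝ, 0 < E →
      E ≤ W ^ ((2 : ℝ) / 3) / 2 →
      ∑' k : ℕ, (if W + E ≤ (k : ℝ) then W ^ k / (Nat.factorial k : ℝ) else 0)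
        ≤ C * (W ^ ((1 : ℝ) / 2) / E) * Real.exp (W - E ^ 2 / (2 * W)) := by
  refine ⟨exp (1 / 4), exp_pos _, 3, by norm_num, fun W hW E hE hEW => ?_⟩
  have hW0 : 0 < W := by linarith
  simp_rw [← Nat.ceil_le]
  set m := ⌈W + E⌉₊
  have hm : W + E ≤ m := Nat.le_ceil _
  have hcube : ((m : ℝ) - W) ^ 3 ≤ W ^ 2 :=
    pow_three_le_sq_of_le_rpow_two_thirds hW hEW (by linarith)
      (by linarith [Nat.ceil_lt_add_one (by positivity : 0 ≤ W + E)])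
  have hmW : (m : ℝ) - W ≤ W :=
    le_of_pow_le_pow_left₀ three_ne_zero hW0.le (by nlinarith)
  calc _ ≤ √(m / (2 * π)) / (m - W) * exp (W - (m - W) ^ 2 / (W + m)) :=
        tsum_exp_series_tail_le_gaussian hW0 (by linarith)
    _ ≤ √W / E * exp (1 / 4 + (W - E ^ 2 / (2 * W))) := by
        gcongr
        · rw [div_le_iff₀ (by positivity)]
          nlinarith [pi_gt_three]
        · linarith
        · linarith [sq_div_two_mul_le_of_pow_three_le hW0 hE hm hcube]
    _ = _ := by rw [exp_add, sqrt_eq_rpow]; ring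
end

section
/- For every real $y \ge 3$ and every positive integer $J$, one has $\sum_{A : P^+(A) \le y,\ \Omega(A) = J} \frac{1}{A} \le C \frac{J}{2^J} (\log y)^2$ for some absolute constant $C > 0$, where the sum is over positive integers $A$ all of whose prime factors are at most $y$ and which have exactly $J$ prime factors counted with multiplicity. -/
/-!
Rankin's trick: for `0 ≤ z < 2`, every `y`-smooth `A` with `Ω(A) = J` satisfies
`z ^ J / A = z ^ Ω(A) / A`, so `z ^ J` times the sum is at most the Euler product
`∑_{P⁺(A) ≤ y} z ^ Ω(A) / A = ∏_{p ≤ y} (1 - z / p)⁻¹`. With `z = 2 - 1 / J` the factor at `p = 2`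
is `2 J` and Bernoulli's inequality gives `z ^ J ≥ 2 ^ J / 2`, while each odd prime contributes at
most `exp (2 / p + 12 / p ^ 2)`, so the odd part is `≪ exp (2 ∑_{p ≤ y} 1 / p) ≪ (log y) ^ 2` by
Mertens' second theorem. That theorem follows by partial summation from Mertens' first,
`∑_{p ≤ n} log p / p ≤ log n + log 4`, which compares Legendre's formula for `log n!` with
Chebyshev's bound `θ(n) ≤ n log 4`.
-/

open Real Finset
open scoped Nat ArithmeticFunction.Omega

theorem Nat.div_le_factorization_factorial {p : ℕ} (hp : p.Prime) (n : ℕ) :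
    n / p ≤ (n !).factorization p := by
  rcases lt_or_ge n p with hnp | hpn
  · simp [Nat.div_eq_of_lt hnp]
  rw [Nat.factorization_factorial hp (Nat.lt_add_one (Nat.log p n))]
  have h1 : 1 ∈ Ico 1 (Nat.log p n + 1) := by
    simp [Nat.log_pos hp.one_lt hpn]
  simpa using single_le_sum (f := fun i => n / p ^ i) (fun _ _ => Nat.zero_le _) h1

theorem sum_primesLE_div_mul_log_le_log_factorial (n : ℕ) :
    ∑ p ∈ n.primesLE, ((n / p : ℕ) : ℝ) * log p ≤ log (n ! : ℝ) := by
  have hsub : n.primesLE ⊆ (n !).factorization.support := by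
    intro p hp
    obtain ⟨hpn, hp⟩ := Nat.mem_primesLE.mp hp
    rw [Nat.support_factorization, Nat.mem_primeFactors]
    exact ⟨hp, hp.dvd_factorial.mpr hpn, Nat.factorial_ne_zero n⟩
  rw [log_nat_eq_sum_factorization, Finsupp.sum]
  calc ∑ p ∈ n.primesLE, ((n / p : ℕ) : ℝ) * log p
      ≤ ∑ p ∈ n.primesLE, ((n !).factorization p : ℝ) * log p := by
        gcongr with p hp
        exact Nat.div_le_factorization_factorial (Nat.prime_of_mem_primesLE hp) n
    _ ≤ _ := sum_le_sum_of_subset_of_nonneg hsub fun p _ _ => by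
        have := log_natCast_nonneg p; positivity

theorem sum_primesLE_log_div_le (n : ℕ) :
    ∑ p ∈ n.primesLE, log p / p ≤ log n + log 4 := by
  rcases Nat.eq_zero_or_pos n with rfl | hn
  · simpa using log_nonneg (by norm_num)
  have hn' : (0 : ℝ) < n := by exact_mod_cast hn
  rw [← mul_le_mul_iff_right₀ hn']
  calc (n : ℝ) * ∑ p ∈ n.primesLE, log p / p
      = ∑ p ∈ n.primesLE, (n : ℝ) / p * log p := by
        rw [mul_sum]; exact sum_congr rfl fun p _ => by ring
    _ ≤ ∑ p ∈ n.primesLE, (((n / p : ℕ) : ℝ) + 1) * log p := by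
        gcongr
        rw [← Nat.floor_div_eq_div (K := ℝ)]
        exact (Nat.lt_floor_add_one _).le
    _ = ∑ p ∈ n.primesLE, ((n / p : ℕ) : ℝ) * log p + Chebyshev.theta n := by
        rw [Chebyshev.theta_eq_sum_primesLE_log, ← sum_add_distrib]
        exact sum_congr rfl fun p _ => by ring
    _ ≤ log (n ! : ℝ) + log 4 * n :=
        add_le_add (sum_primesLE_div_mul_log_le_log_factorial n)
          (Chebyshev.theta_le_log4_mul_x hn'.le)
    _ ≤ log ((n : ℝ) ^ n) + log 4 * n := by
        gcongr
        exact_mod_cast Nat.factorial_le_pow n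
    _ = n * (log n + log 4) := by rw [log_pow]; ring

theorem log_mul_inv_log_sub_inv_log_le {x y : ℝ} (hx : 1 < x) (hy : 1 < y) :
    log x * ((log x)⁻¹ - (log y)⁻¹) ≤ log (log y) - log (log x) := by
  have hu := log_pos hx
  have hv := log_pos hy
  have := one_sub_inv_le_log_of_pos (div_pos hv hu)
  rw [inv_div, log_div hv.ne' hu.ne'] at this
  rwa [mul_sub, mul_inv_cancel₀ hu.ne', ← div_eq_mul_inv]

theorem sum_Ico_div_log_le {a : ℕ → ℝ} {c : ℝ} (ha : ∀ i, 0 ≤ a i)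
    (hG : ∀ k, ∑ i ∈ range (k + 1), a i ≤ log k + c) {n : ℕ} (hn : 2 ≤ n) :
    ∑ i ∈ Ico 2 (n + 1), a i / log i ≤ log (log n) - log (log 2) + 1 + c / log 2 := by
  set w : ℕ → ℝ := fun i => (log i)⁻¹ with hw
  have hlog_pos {i : ℕ} (hi : 2 ≤ i) : 0 < log i := log_pos (by exact_mod_cast hi)
  have hw_anti {i : ℕ} (hi : 2 ≤ i) : 0 ≤ w i - w (i + 1) := by
    simp only [hw, sub_nonneg, Nat.cast_succ]
    gcongr
    · exact hlog_pos hi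
    · linarith
  have hstep {i : ℕ} (hi : 2 ≤ i) :
      -(w (i + 1) - w i) * ∑ j ∈ range (i + 1), a j
        ≤ (log (log ↑(i + 1)) - log (log i)) + c * (w i - w (i + 1)) := by
    have hmono : log i * (w i - w (i + 1)) ≤ log (log ↑(i + 1)) - log (log i) :=
      log_mul_inv_log_sub_inv_log_le (by exact_mod_cast hi)
        (by exact_mod_cast (by omega : 2 ≤ i + 1))
    linarith [mul_le_mul_of_nonneg_left (hG i) (hw_anti hi)]
  have htail : ∑ i ∈ Ico 2 n, -(w (i + 1) - w i) * ∑ j ∈ range (i + 1), a j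
      ≤ (log (log n) - log (log 2)) + c * (w 2 - w n) := by
    have hw_tel : ∑ i ∈ Ico 2 n, (w i - w (i + 1)) = w 2 - w n := by
      rw [← neg_sub (w n) (w 2), ← sum_Ico_sub w hn, ← sum_neg_distrib]
      simp
    calc _ ≤ ∑ i ∈ Ico 2 n, ((log (log ↑(i + 1)) - log (log i)) + c * (w i - w (i + 1))) :=
          sum_le_sum fun i hi => hstep (mem_Ico.mp hi).1
      _ = _ := by
        rw [sum_add_distrib, ← mul_sum, sum_Ico_sub (fun i => log (log i)) hn, hw_tel]
        push_cast; ring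
  have hG2 : 0 ≤ ∑ i ∈ range 2, a i := sum_nonneg fun i _ => ha i
  have hwn : w n * log n = 1 := inv_mul_cancel₀ (hlog_pos hn).ne'
  have hw2 : w 2 = (log 2)⁻¹ := by simp [hw]
  have hparts := sum_Ico_by_parts w a (by omega : 2 < n + 1)
  rw [div_eq_mul_inv c, sum_congr rfl fun i _ => div_eq_inv_mul (a i) (log i)]
  simp only [smul_eq_mul, Nat.add_sub_cancel] at hparts
  rw [hparts]
  simp only [← neg_mul, sub_eq_add_neg, ← sum_neg_distrib] at htail ⊢
  rw [hw2] at htail ⊢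
  linarith [mul_le_mul_of_nonneg_left (hG n) (by positivity : 0 ≤ w n),
    mul_nonneg (inv_pos.mpr (log_pos one_lt_two)).le hG2]

theorem sum_primesLE_inv_le {n : ℕ} (hn : 2 ≤ n) :
    ∑ p ∈ n.primesLE, (p : ℝ)⁻¹ ≤ log (log n) + 4 := by
  set a : ℕ → ℝ := fun i => if i.Prime then log i / i else 0 with ha
  have ha0 (i : ℕ) : 0 ≤ a i := by
    simp only [ha]; split_ifs <;> positivity
  have hG (k : ℕ) : ∑ i ∈ range (k + 1), a i ≤ log k + log 4 := by
    rw [ha, ← sum_filter, ← Nat.primesLE_eq_filter_range]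
    exact sum_primesLE_log_div_le k
  have hsum : ∑ p ∈ n.primesLE, (p : ℝ)⁻¹ = ∑ i ∈ Ico 2 (n + 1), a i / log i := by
    rw [Nat.primesLE_eq_filter_Icc_two, sum_filter, ← Finset.Ico_add_one_right_eq_Icc]
    refine sum_congr rfl fun i hi => ?_
    have hlog : log i ≠ 0 := (log_pos (by exact_mod_cast (mem_Ico.mp hi).1)).ne'
    split_ifs with hp <;> simp [ha, hp, field]
  have hlog4 : log 4 / log 2 = 2 := by
    rw [show (4 : ℝ) = 2 ^ 2 by norm_num, log_pow]
    field_simp [(log_pos one_lt_two).ne']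
    norm_num
  have hloglog2 : -1 ≤ log (log 2) :=
    calc (-1 : ℝ) ≤ -log 2 := by linarith [log_two_lt_d9]
      _ = log (1 / 2) := by rw [one_div, log_inv]
      _ ≤ log (log 2) := log_le_log (by norm_num) (by linarith [log_two_gt_d9])
  rw [hsum]
  linarith [sum_Ico_div_log_le ha0 hG hn]

theorem inv_one_sub_div_le_exp {p z : ℝ} (hp : 3 ≤ p) (hz : z ≤ 2) :
    (1 - z / p)⁻¹ ≤ exp (2 * p⁻¹ + 12 * (p ^ 2)⁻¹) := by
  have hp2 : 0 < p - 2 := by linarith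
  calc (1 - z / p)⁻¹ = p / (p - z) := by field_simp
    _ ≤ p / (p - 2) := by gcongr
    _ = 1 + 2 / (p - 2) := by field_simp; ring
    _ ≤ 2 * p⁻¹ + 12 * (p ^ 2)⁻¹ + 1 := by
        rw [add_comm, add_le_add_iff_right, div_le_iff₀ hp2]
        field_simp
        nlinarith
    _ ≤ exp (2 * p⁻¹ + 12 * (p ^ 2)⁻¹) := add_one_le_exp _

theorem prod_primesLE_erase_two_inv_one_sub_div_le {n : ℕ} (hn : 2 ≤ n) {z : ℝ} (hz : z ≤ 2) :
    ∏ p ∈ n.primesLE.erase 2, (1 - z / p)⁻¹ ≤ exp 16 * log n ^ 2 := by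
  set s := n.primesLE.erase 2
  have hs : s ⊆ Ioo 2 (n + 1) := by
    intro p hp
    obtain ⟨hp2, hp⟩ := mem_erase.mp hp
    obtain ⟨hpn, hp⟩ := Nat.mem_primesLE.mp hp
    exact mem_Ioo.mpr ⟨lt_of_le_of_ne hp.two_le hp2.symm, Nat.lt_succ_of_le hpn⟩
  have hp3 (p : ℕ) (hp : p ∈ s) : (3 : ℝ) ≤ p := by
    exact_mod_cast (mem_Ioo.mp (hs hp)).1
  have hrecip : ∑ p ∈ s, (p : ℝ)⁻¹ ≤ log (log n) + 4 :=
    (sum_le_sum_of_subset_of_nonneg (erase_subset _ _) fun _ _ _ => by positivity).trans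
      (sum_primesLE_inv_le hn)
  have hsq : ∑ p ∈ s, ((p : ℝ) ^ 2)⁻¹ ≤ 2 / 3 :=
    (sum_le_sum_of_subset_of_nonneg hs fun _ _ _ => by positivity).trans
      ((sum_Ioo_inv_sq_le 2 (n + 1)).trans_eq (by norm_num))
  have hlog : 0 < log n := log_pos (by exact_mod_cast hn)
  calc ∏ p ∈ s, (1 - z / p)⁻¹ ≤ ∏ p ∈ s, exp (2 * (p : ℝ)⁻¹ + 12 * ((p : ℝ) ^ 2)⁻¹) := by
        refine prod_le_prod (fun p hp => ?_) fun p hp => inv_one_sub_div_le_exp (hp3 p hp) hz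
        have := hp3 p hp
        rw [inv_nonneg, sub_nonneg, div_le_one (by linarith)]
        linarith
    _ = exp (2 * ∑ p ∈ s, (p : ℝ)⁻¹ + 12 * ∑ p ∈ s, ((p : ℝ) ^ 2)⁻¹) := by
        rw [← exp_sum, sum_add_distrib, mul_sum, mul_sum]
    _ ≤ exp ((2 : ℕ) * log (log n) + 16) := exp_le_exp.mpr (by push_cast; linarith)
    _ = exp 16 * log n ^ 2 := by rw [exp_add, exp_nat_mul, exp_log hlog, mul_comm]

theorem prod_primesLE_inv_one_sub_two_sub_inv_div_le {n J : ℕ} (hn : 2 ≤ n) (hJ : 0 < J) :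
    ∏ p ∈ n.primesLE, (1 - (2 - 1 / (J : ℝ)) / p)⁻¹ ≤ 2 * J * (exp 16 * log n ^ 2) := by
  have h2 : (1 - (2 - 1 / J) / ((2 : ℕ) : ℝ))⁻¹ = 2 * J := by
    have : (J : ℝ) ≠ 0 := by positivity
    field_simp; ring
  rw [← mul_prod_erase _ _ (Nat.mem_primesLE.mpr ⟨hn, Nat.prime_two⟩), h2]
  gcongr
  exact prod_primesLE_erase_two_inv_one_sub_div_le hn (sub_le_self 2 (by positivity))

noncomputable def cardFactorsWeight (z : ℝ) : ℕ →* ℝ where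
  toFun m := z ^ Ω m / m
  map_one' := by simp
  map_mul' m n := by
    rcases eq_or_ne m 0 with rfl | hm
    · simp
    rcases eq_or_ne n 0 with rfl | hn
    · simp
    rw [ArithmeticFunction.cardFactors_mul hm hn, pow_add, Nat.cast_mul, mul_div_mul_comm]

theorem hasSum_cardFactorsWeight_smoothNumbers {z : ℝ} (hz : |z| < 2) (N : ℕ) :
    HasSum (fun m : N.smoothNumbers => cardFactorsWeight z m)
      (∏ p ∈ N.primesBelow, (1 - z / p)⁻¹) := by
  have hprime {p : ℕ} (hp : p.Prime) : cardFactorsWeight z p = z / p := by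
    simp [cardFactorsWeight, ArithmeticFunction.cardFactors_apply_prime hp]
  have hnorm {p : ℕ} (hp : p.Prime) : ‖cardFactorsWeight z p‖ < 1 := by
    rw [hprime hp, norm_div, Real.norm_eq_abs, Real.norm_natCast,
      div_lt_one (by exact_mod_cast hp.pos)]
    exact hz.trans_le (by exact_mod_cast hp.two_le)
  have h := (EulerProduct.summable_and_hasSum_smoothNumbers_prod_primesBelow_geometric
    hnorm N).2
  rwa [prod_congr rfl fun p hp => by rw [hprime (Nat.prime_of_mem_primesBelow hp)]] at h

theorem pow_mul_tsum_smoothNumbers_cardFactors_eq_le {z : ℝ} (hz0 : 0 ≤ z) (hz : z < 2) (N J : ℕ) :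
    z ^ J * ∑' m : ℕ, (if m ∈ N.smoothNumbers ∧ Ω m = J then (1 : ℝ) / m else 0)
      ≤ ∏ p ∈ N.primesBelow, (1 - z / p)⁻¹ := by
  have hsum := hasSum_subtype_iff_indicator.mp
    (hasSum_cardFactorsWeight_smoothNumbers (abs_lt.mpr ⟨by linarith, hz⟩) N)
  have hle (m : ℕ) : z ^ J * (if m ∈ N.smoothNumbers ∧ Ω m = J then (1 : ℝ) / m else 0)
      ≤ N.smoothNumbers.indicator (cardFactorsWeight z) m := by
    split_ifs with h
    · rw [Set.indicator_of_mem h.1]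
      simp [cardFactorsWeight, h.2, div_eq_mul_inv]
    · rw [mul_zero]
      exact Set.indicator_nonneg (fun m _ => by simp [cardFactorsWeight]; positivity) m
  rw [← tsum_mul_left, ← hsum.tsum_eq]
  refine Summable.tsum_le_tsum hle (hsum.summable.of_nonneg_of_le (fun m => ?_) hle) hsum.summable
  split_ifs <;> positivity

theorem two_pow_le_two_mul_two_sub_inv_pow (J : ℕ) : (2 : ℝ) ^ J ≤ 2 * (2 - 1 / J) ^ J := by
  have hJ : (J : ℝ) * (J : ℝ)⁻¹ ≤ 1 := by
    rcases eq_or_ne J 0 with rfl | hJ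
    · simp
    · rw [mul_inv_cancel₀ (by exact_mod_cast hJ)]
  have hbern := one_add_mul_le_pow (a := -(1 / (2 * J) : ℝ))
    (by have := Nat.cast_inv_le_one (α := ℝ) J; ring_nf; linarith) J
  calc (2 : ℝ) ^ J = 2 * 2 ^ J * (1 / 2) := by ring
    _ ≤ 2 * 2 ^ J * (1 + J * -(1 / (2 * J))) := by gcongr; ring_nf; linarith
    _ ≤ 2 * 2 ^ J * (1 + -(1 / (2 * J))) ^ J := by gcongr
    _ = 2 * (2 - 1 / J) ^ J := by rw [mul_assoc, ← mul_pow]; ring_nf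

theorem Nat.mem_smoothNumbers_floor_add_one_iff {y : ℝ} (hy : 0 ≤ y) {A : ℕ} :
    A ∈ (⌊y⌋₊ + 1).smoothNumbers ↔ 0 < A ∧ ∀ p ∈ A.primeFactors, (p : ℝ) ≤ y := by
  rw [Nat.mem_smoothNumbers_iff_primeFactors_subset, Nat.pos_iff_ne_zero, subset_iff]
  refine and_congr_right fun _ => forall₂_congr fun p hp => ?_
  rw [Nat.mem_primesBelow, Nat.lt_succ_iff, Nat.le_floor_iff hy]
  simp [Nat.prime_of_mem_primeFactors hp]

/-- Rankin-type bound: there is an absolute constant `C > 0` such that for all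
`y ≥ 3` and positive integers `J`, the sum of `1/A` over `y`-smooth positive
integers `A` with exactly `J` prime factors (with multiplicity) is at most
`C · (J/2^J) · (log y)²`. -/
theorem smooth_reciprocal_sum_bound :
    ∃ C > (0 : ℝ), ∀ y : ℝ, 3 ≤ y → ∀ J : ℕ, 0 < J →
      ∑' A : ℕ, (if 0 < A ∧ (∀ p ∈ A.primeFactors, (p : ℝ) ≤ y) ∧
            A.primeFactorsList.length = J then (1 : ℝ) / A else 0)
        ≤ C * (J / 2 ^ J) * (Real.log y) ^ 2 := by
  refine ⟨4 * exp 16, by positivity, fun y hy J hJ => ?_⟩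
  have hJ1 : 1 / (J : ℝ) ≤ 1 := by rw [div_le_one (by positivity)]; exact_mod_cast hJ
  have hn : 2 ≤ ⌊y⌋₊ := Nat.le_floor (by norm_num; linarith)
  have hrankin := pow_mul_tsum_smoothNumbers_cardFactors_eq_le (z := 2 - 1 / (J : ℝ))
    (sub_nonneg.mpr (hJ1.trans one_le_two)) (sub_lt_self 2 (by positivity)) (⌊y⌋₊ + 1) J
  simp only [Nat.mem_smoothNumbers_floor_add_one_iff (by linarith : 0 ≤ y), and_assoc,
    ArithmeticFunction.cardFactors_apply] at hrankin
  have hprod : ∏ p ∈ ⌊y⌋₊.primesLE, (1 - (2 - 1 / (J : ℝ)) / p)⁻¹ ≤ 2 * J * (exp 16 * log y ^ 2) :=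
    (prod_primesLE_inv_one_sub_two_sub_inv_div_le hn hJ).trans
      (by gcongr; exact Nat.floor_le (by linarith))
  set S := ∑' A : ℕ, (if 0 < A ∧ (∀ p ∈ A.primeFactors, (p : ℝ) ≤ y) ∧
    A.primeFactorsList.length = J then (1 : ℝ) / A else 0)
  have hS : 0 ≤ S := tsum_nonneg fun A => by split_ifs <;> positivity
  rw [show 4 * exp 16 * (J / 2 ^ J) * log y ^ 2 = 2 * (2 * J * (exp 16 * log y ^ 2)) / 2 ^ J by
    ring, le_div_iff₀ (by positivity)]
  calc S * 2 ^ J ≤ S * (2 * (2 - 1 / J) ^ J) :=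
        mul_le_mul_of_nonneg_left (two_pow_le_two_mul_two_sub_inv_pow J) hS
    _ = 2 * ((2 - 1 / J) ^ J * S) := by ring
    _ ≤ 2 * (2 * J * (exp 16 * log y ^ 2)) := by linarith [hrankin.trans hprod]
end

section
/- Define $F(\beta) = 2\sqrt{\beta(1-\beta)} - 4\beta + 2\beta\log\left(\frac{4\beta}{1-\beta}\right)$ for $\beta \in (0,1)$. Then $F(1/5) = 0$ and $F$ is strictly increasing on $(1/5, 1)$; in particular $F(\beta) > 0$ for all $\beta \in (1/5, 1)$. -/
/-!
Positivity on `(1/5, 1)` follows from `F(1/5) = 0` and strict monotonicity on `[1/5, 1)`.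
With `s = √(β(1-β))` one has `F'(β) = (1-2β)/s - 4 + 2/(1-β) + 2 log(4β/(1-β))`, and since
`4β/(1-β) = (2s/(1-β))²`, the bound `log x ≥ 1 - 1/x` at `x = 2s/(1-β)` gives
`F'(β) ≥ 2/(1-β) - 1/s`, which is positive exactly when `(1-β)² < 4β(1-β)`, i.e. `β > 1/5`.
-/

open Real Set

lemma hasDerivAt_sqrt_mul_one_sub {x : ℝ} (hx : x * (1 - x) ≠ 0) :
    HasDerivAt (fun y => √(y * (1 - y))) ((1 - 2 * x) / (2 * √(x * (1 - x)))) x := by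
  convert ((hasDerivAt_id' x).fun_mul ((hasDerivAt_id' x).const_sub 1)).sqrt hx using 2
  ring

lemma hasDerivAt_log_mul_div_one_sub {c x : ℝ} (hc : c ≠ 0) (hx₀ : x ≠ 0) (hx₁ : x ≠ 1) :
    HasDerivAt (fun y => log (c * y / (1 - y))) (1 / (x * (1 - x))) x := by
  have h₁ : 1 - x ≠ 0 := sub_ne_zero.2 hx₁.symm
  convert (((hasDerivAt_id' x).const_mul c).fun_div ((hasDerivAt_id' x).const_sub 1) h₁).log
    (by simp [*]) using 1
  field_simp
  ring

section

variable {F : ℝ → ℝ} (hF : ∀ β : ℝ, F β = 2 * √(β * (1 - β)) - 4 * β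
    + 2 * β * log (4 * β / (1 - β)))
include hF

lemma hasDerivAt_F {β : ℝ} (h₀ : 0 < β) (h₁ : β < 1) :
    HasDerivAt F ((1 - 2 * β) / √(β * (1 - β)) - 4 + 2 / (1 - β)
      + 2 * log (4 * β / (1 - β))) β := by
  have hβ : 0 < β * (1 - β) := mul_pos h₀ (sub_pos.2 h₁)
  rw [funext hF]
  refine ((((hasDerivAt_sqrt_mul_one_sub hβ.ne').const_mul 2).fun_sub
    ((hasDerivAt_id' β).const_mul 4)).fun_add (((hasDerivAt_id' β).const_mul 2).fun_mul
      (hasDerivAt_log_mul_div_one_sub four_ne_zero h₀.ne' h₁.ne))).congr_deriv ?_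
  field_simp
  ring

lemma deriv_F_pos {β : ℝ} (h₀ : 1 / 5 < β) (h₁ : β < 1) : 0 < deriv F β := by
  rw [(hasDerivAt_F hF (by linarith) h₁).deriv]
  have hβ : 0 < β * (1 - β) := mul_pos (by linarith) (by linarith)
  have h1β : 0 < 1 - β := by linarith
  set s := √(β * (1 - β))
  have hs : 0 < s := sqrt_pos.2 hβ
  have hs_sq : s ^ 2 = β * (1 - β) := sq_sqrt hβ.le
  have hlog : log (4 * β / (1 - β)) = 2 * log (2 * s / (1 - β)) := by
    have hsq : 4 * β / (1 - β) = (2 * s / (1 - β)) ^ 2 := by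
      rw [div_pow, mul_pow, hs_sq]
      field_simp
      ring
    rw [hsq, log_pow]
    norm_num
  have hlog_ge : 1 - (1 - β) / (2 * s) ≤ log (2 * s / (1 - β)) := by
    simpa using one_sub_inv_le_log_of_pos (x := 2 * s / (1 - β)) (by positivity)
  have hs_gt : 1 - β < 2 * s := by nlinarith
  calc 0 < 2 / (1 - β) - 1 / s := by
        rw [sub_pos, div_lt_div_iff₀ hs h1β]
        linarith
    _ = (1 - 2 * β) / s - 4 + 2 / (1 - β) + 4 * (1 - (1 - β) / (2 * s)) := by
        field_simp
        ring
    _ ≤ _ := by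
        rw [hlog]
        linarith

lemma F_one_fifth : F (1 / 5) = 0 := by
  rw [hF, show (1 / 5 : ℝ) * (1 - 1 / 5) = (2 / 5) ^ 2 by norm_num, sqrt_sq (by norm_num)]
  norm_num

lemma strictMonoOn_F : StrictMonoOn F (Ico (1 / 5) 1) :=
  strictMonoOn_of_deriv_pos (convex_Ico _ _)
    (fun x hx => (hasDerivAt_F hF (by linarith [hx.1]) hx.2).continuousAt.continuousWithinAt)
    (fun x hx => by
      rw [interior_Ico] at hx
      exact deriv_F_pos hF hx.1 hx.2)

end

/-- With `F(β) = 2√(β(1-β)) - 4β + 2β log(4β/(1-β))` on `(0,1)`, one has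
`F(1/5) = 0`, `F` is strictly increasing on `(1/5, 1)`, and `F(β) > 0` for all
`β ∈ (1/5, 1)`. -/
theorem F_pos_on_interval
    (F : ℝ → ℝ)
    (hF : ∀ β : ℝ, F β = 2 * Real.sqrt (β * (1 - β)) - 4 * β
        + 2 * β * Real.log (4 * β / (1 - β))) :
    F (1 / 5) = 0
    ∧ StrictMonoOn F (Set.Ioo (1 / 5 : ℝ) 1)
    ∧ ∀ β ∈ Set.Ioo (1 / 5 : ℝ) 1, 0 < F β := by
  refine ⟨F_one_fifth hF, (strictMonoOn_F hF).mono Ioo_subset_Ico_self, fun β hβ => ?_⟩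
  rw [← F_one_fifth hF]
  exact strictMonoOn_F hF (left_mem_Ico.2 (by norm_num)) (Ioo_subset_Ico_self hβ) hβ.1
end

section
/- For each fixed $\alpha \in (0,1)$, define $H_\alpha(\beta) = 2\beta + 2^{-\alpha/(1-\alpha)}(1-\beta) - \left(\frac{\beta}{\alpha}\right)^\alpha \left(\frac{1-\beta}{1-\alpha}\right)^{1-\alpha}$ for $\beta \in (0,1)$. Then $H_\alpha(\beta) \ge 0$ for all $\beta \in (0,1)$, with equality exactly at $\beta = \beta_\alpha := \left(1 + 2^{1/(1-\alpha)}(\alpha^{-1} - 1)\right)^{-1}$. -/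
open Real

/-- Strict two-point weighted AM-GM. -/
lemma strict_amgm (α a b : ℝ) (hα0 : 0 < α) (hα1 : α < 1)
    (ha : 0 < a) (hb : 0 < b) (hab : a ≠ b) :
    a ^ α * b ^ (1 - α) < α * a + (1 - α) * b := by
  have h1α : 0 < 1 - α := by linarith
  have hlog := strictConcaveOn_log_Ioi.2 (Set.mem_Ioi.2 ha) (Set.mem_Ioi.2 hb) hab
    hα0 h1α (by ring)
  simp only [smul_eq_mul] at hlog
  calc a ^ α * b ^ (1 - α) = Real.exp (α * Real.log a + (1 - α) * Real.log b) := by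
        rw [Real.exp_add, ← Real.log_rpow ha, ← Real.log_rpow hb,
          Real.exp_log (by positivity), Real.exp_log (by positivity)]
    _ < Real.exp (Real.log (α * a + (1 - α) * b)) := Real.exp_lt_exp.2 hlog
    _ = α * a + (1 - α) * b := Real.exp_log (by positivity)

/-- For fixed `α ∈ (0,1)` and `β ∈ (0,1)`, the function
`H_α(β) = 2β + 2^{-α/(1-α)}(1-β) - (β/α)^α ((1-β)/(1-α))^{1-α}` is nonnegative,
vanishing exactly at `β = β_α = (1 + 2^{1/(1-α)}(α⁻¹-1))⁻¹`. -/
theorem H_alpha_nonneg (α β : ℝ) (hα0 : 0 < α) (hα1 : α < 1)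
    (hβ0 : 0 < β) (hβ1 : β < 1) :
    0 ≤ 2 * β + (2 : ℝ) ^ (-(α / (1 - α))) * (1 - β)
        - (β / α) ^ α * ((1 - β) / (1 - α)) ^ (1 - α)
    ∧ (2 * β + (2 : ℝ) ^ (-(α / (1 - α))) * (1 - β)
        - (β / α) ^ α * ((1 - β) / (1 - α)) ^ (1 - α) = 0
      ↔ β = (1 + (2 : ℝ) ^ ((1 : ℝ) / (1 - α)) * (α⁻¹ - 1))⁻¹) := by
  have h1α : 0 < 1 - α := by linarith
  have h1β : 0 < 1 - β := by linarith
  set c : ℝ := (2 : ℝ) ^ (-(α / (1 - α))) with hc_def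
  set d : ℝ := (2 : ℝ) ^ ((1 : ℝ) / (1 - α)) with hd_def
  have hc : 0 < c := Real.rpow_pos_of_pos two_pos _
  have hd : 0 < d := Real.rpow_pos_of_pos two_pos _
  have hcd : c * d = 2 := by
    rw [hc_def, hd_def, ← Real.rpow_add two_pos,
      show -(α / (1 - α)) + (1 : ℝ) / (1 - α) = 1 by field_simp; ring, Real.rpow_one]
  set x : ℝ := 2 * β / α with hx_def
  set y : ℝ := c * (1 - β) / (1 - α) with hy_def
  have hx : 0 < x := by positivity
  have hy : 0 < y := by positivity
  -- geometric mean identity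
  have hgeom : x ^ α * y ^ (1 - α) = (β / α) ^ α * ((1 - β) / (1 - α)) ^ (1 - α) := by
    have hx2 : x = 2 * (β / α) := by rw [hx_def]; ring
    have hy2 : y = c * ((1 - β) / (1 - α)) := by rw [hy_def]; ring
    have hc2 : c ^ (1 - α) = (2 : ℝ) ^ (-α) := by
      rw [hc_def, ← Real.rpow_mul (by norm_num : (0:ℝ) ≤ 2)]
      congr 1; field_simp
    rw [hx2, hy2, Real.mul_rpow (by norm_num) (by positivity),
      Real.mul_rpow hc.le (by positivity), hc2]
    have : (2 : ℝ) ^ α * ((2 : ℝ) ^ (-α)) = 1 := by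
      rw [← Real.rpow_add two_pos]; simp
    calc (2:ℝ)^α * (β/α)^α * ((2:ℝ)^(-α) * ((1-β)/(1-α))^(1-α))
        = ((2:ℝ)^α * (2:ℝ)^(-α)) * ((β/α)^α * ((1-β)/(1-α))^(1-α)) := by ring
      _ = (β/α)^α * ((1-β)/(1-α))^(1-α) := by rw [this]; ring
  have harith : α * x + (1 - α) * y = 2 * β + c * (1 - β) := by
    rw [hx_def, hy_def]; field_simp
  -- equality condition
  have hiff : x = y ↔ β = (1 + d * (α⁻¹ - 1))⁻¹ := by
    have ht : 0 < 1 + d * (α⁻¹ - 1) := by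
      have : 1 < α⁻¹ := (one_lt_inv_iff₀).2 ⟨hα0, hα1⟩
      nlinarith
    have hlin : x = y ↔ β * (α + d * (1 - α)) = α := by
      rw [hx_def, hy_def, div_eq_div_iff (ne_of_gt hα0) (ne_of_gt h1α)]
      constructor
      · intro h
        linear_combination (d / 2) * h + (α * (1 - β) / 2) * hcd
      · intro h
        linear_combination c * h - (β * (1 - α)) * hcd
    have hβeq : β = (1 + d * (α⁻¹ - 1))⁻¹ ↔ β * (α + d * (1 - α)) = α := by
      rw [eq_comm, inv_eq_iff_eq_inv, eq_comm, inv_eq_one_div, div_eq_iff (ne_of_gt hβ0)]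
      constructor
      · intro h
        have hαne : α ≠ 0 := ne_of_gt hα0
        field_simp at h
        linear_combination -h
      · intro h
        have hαne : α ≠ 0 := ne_of_gt hα0
        field_simp
        linear_combination -h
    rw [hlin, hβeq]
  have hmain : 2 * β + c * (1 - β) - (β / α) ^ α * ((1 - β) / (1 - α)) ^ (1 - α)
      = α * x + (1 - α) * y - x ^ α * y ^ (1 - α) := by rw [hgeom, harith]
  constructor
  · rw [hmain, sub_nonneg]
    exact Real.geom_mean_le_arith_mean2_weighted hα0.le h1α.le hx.le hy.le (by ring)
  · rw [hmain, sub_eq_zero, ← hiff]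
    constructor
    · intro h
      by_contra hne
      exact absurd h (ne_of_gt (strict_amgm α x y hα0 hα1 hx hy hne))
    · intro h
      rw [← h, ← Real.rpow_add hx, show α + (1 - α) = 1 by ring, Real.rpow_one]
      ring
end
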